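/- Let V be a free graded k-module with homogeneous basis β and let v_1…v_n be a word in β_n with cyclic period k (the smallest positive integer with τ^k*(v_1…v_n) = v_1…v_n as words). If the signed cyclic action satisfies τ^k·[v_1|…|v_n] = −[v_1|…|v_n] in V^{⊗n}, then the cyclic invariant submodule of V^{⊗n} spanned by the orbit of [v_1|…|v_n] is isomorphic to the 2-torsion submodule _2k = {x ∈ k : 2x = 0}, generated by sym(v_1…v_n) = Σ_{i=0}^{k−1} τ^i·[v_1|…|v_n]; and the corresponding summand of the coinvariants is isomorphic to k/2k. -/

import Mathlib

/-!
STATEMENT 13.  Let `V` be a free graded `k`-module with homogeneous basis `B`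
(with degrees `deg : B → ℤ`), and let `w = v₁…vₙ` be a word in the basis of
length `n ≥ 1` with cyclic period `p` (the smallest positive integer with
`τᵖ * w = w` as words).  If the signed cyclic operator satisfies
`τᵖ·[w] = -[w]` in `V^{⊗n}`, then the invariant part of the orbit span of
`[w]` is isomorphic to the 2-torsion `₂k` of `k` via `c ↦ c·sym(w)` where
`sym(w) = ∑_{i<p} τ^i·[w]`, and the corresponding orbit summand of the
coinvariants is isomorphic to `k/2k`.
-/

def sgn (m : ℤ) : ℤ := if Even m then 1 else -1

def degW {B : Type*} (deg : B → ℤ) (l : List B) : ℤ := (l.map deg).sum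

/-- The signed cyclic operator `τ·[v₁|…|vₙ] = (-1)^{|vₙ||v₁…v_{n-1}|}[vₙ|v₁|…|v_{n-1}]`. -/
noncomputable def cyclicTau {k B : Type*} [CommRing k] (deg : B → ℤ) :
    (List B →₀ k) →ₗ[k] (List B →₀ k) :=
  Finsupp.lift _ k _ fun l =>
    match l with
    | [] => Finsupp.single [] 1
    | b :: t =>
      sgn (deg ((b :: t).getLast (by simp)) * degW deg (b :: t).dropLast) •
        Finsupp.single ((b :: t).getLast (by simp) :: (b :: t).dropLast) 1

/-- The unsigned cyclic rotation on words. -/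
def rotW {B : Type*} : List B → List B
  | [] => []
  | b :: t => (b :: t).getLast (by simp) :: (b :: t).dropLast

/-!
Pair words by the standard bilinear form `⟨x, y⟩ = ∑ₗ x(l) y(l)` on the free module on words.
The signed rotation `τ` permutes the basis up to signs, so it preserves `⟨·,·⟩`, and the
vectors `τⁱ[w]` for `i < p` are orthonormal because the words `rotWⁱ w` are distinct; on
them `τ` acts as a negacyclic shift. Hence an invariant `x = ∑ cᵢ τⁱ[w]` has all coefficients
`cᵢ = ⟨τⁱ[w], x⟩` equal to one `c` with `c = -c`, i.e. `x = c • sym(w)` with `2c = 0`.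
On the coinvariant side `x ↦ ⟨x, sym(w)⟩ mod 2` kills the image of `1 - τ`, since
`τ sym(w) = sym(w) - 2[w]`; conversely `x ≡ (∑ cᵢ)[w]` modulo that image, which also contains
`2[w] = [w] - τᵖ[w]`.
-/

open Finset

section CyclicOrbit

variable {R N : Type*} [CommRing R] [AddCommGroup N] [Module R N]

theorem sub_pow_apply_mem_range_id_sub (τ : Module.End R N) (v : N) (i : ℕ) :
    v - (τ ^ i) v ∈ LinearMap.range (LinearMap.id - τ) := by
  induction i with
  | zero => simp
  | succ i ih =>
    have h : v - (τ ^ (i + 1)) v =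
        (v - (τ ^ i) v) + (LinearMap.id - τ : Module.End R N) ((τ ^ i) v) := by
      rw [pow_succ', Module.End.mul_apply, LinearMap.sub_apply, LinearMap.id_apply]
      abel
    rw [h]
    exact add_mem ih (LinearMap.mem_range_self _ _)

variable {τ : Module.End R N} {v : N} {p : ℕ}

theorem pow_add_mul_apply_of_pow_apply_eq_neg (hv : (τ ^ p) v = -v) (r q : ℕ) :
    (τ ^ (r + p * q)) v = (-1 : R) ^ q • (τ ^ r) v := by
  induction q with
  | zero => simp
  | succ q ih =>
    rw [mul_add_one, ← add_assoc, pow_add, Module.End.mul_apply, hv, map_neg, ih, pow_succ,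
      mul_neg_one, neg_smul]

theorem apply_sum_range_pow_apply (hv : (τ ^ p) v = -v) :
    τ (∑ i ∈ range p, (τ ^ i) v) = ∑ i ∈ range p, (τ ^ i) v - (2 : R) • v := by
  have h := sum_range_succ' (fun i => (τ ^ i) v) p
  rw [sum_range_succ, hv, pow_zero, Module.End.one_apply] at h
  simp only [map_sum, ← Module.End.mul_apply, ← pow_succ']
  rw [two_smul]
  linear_combination (norm := module) -h

variable (B : N →ₗ[R] N →ₗ[R] R)

theorem pow_apply_pairing_sum_range_pow_apply
    (hon : ∀ i < p, ∀ j < p, B ((τ ^ i) v) ((τ ^ j) v) = if i = j then 1 else 0)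
    {i : ℕ} (hi : i < p) : B ((τ ^ i) v) (∑ j ∈ range p, (τ ^ j) v) = 1 := by
  rw [map_sum, sum_congr rfl fun j hj => hon i hi j (mem_range.mp hj), sum_ite_eq]
  simp [hi]

theorem eq_sum_smul_pow_apply_of_mem_span (hp : 0 < p) (hv : (τ ^ p) v = -v)
    (hon : ∀ i < p, ∀ j < p, B ((τ ^ i) v) ((τ ^ j) v) = if i = j then 1 else 0)
    {x : N} (hx : x ∈ Submodule.span R (Set.range fun i => (τ ^ i) v)) :
    x = ∑ i ∈ range p, B ((τ ^ i) v) x • (τ ^ i) v := by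
  let D : N →ₗ[R] N := ∑ i ∈ range p, (B ((τ ^ i) v)).smulRight ((τ ^ i) v)
  have hD : ∀ y, D y = ∑ i ∈ range p, B ((τ ^ i) v) y • (τ ^ i) v := fun y => by
    simp [D]
  suffices Submodule.span R (Set.range fun i => (τ ^ i) v) ≤ LinearMap.eqLocus LinearMap.id D by
    simpa [hD] using this hx
  rw [Submodule.span_le, Set.range_subset_iff]
  intro j
  have hj : (τ ^ j) v = (-1 : R) ^ (j / p) • (τ ^ (j % p)) v := by
    rw [← pow_add_mul_apply_of_pow_apply_eq_neg hv, Nat.mod_add_div]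
  have hD_pow : ∀ r < p, D ((τ ^ r) v) = (τ ^ r) v := fun r hr => by
    rw [hD, sum_congr rfl fun i hi => by
      rw [hon i (mem_range.mp hi) r hr, ite_smul, one_smul, zero_smul], sum_ite_eq']
    simp [hr]
  rw [SetLike.mem_coe, LinearMap.mem_eqLocus, LinearMap.id_apply, hj, map_smul,
    hD_pow _ (Nat.mod_lt j hp)]

theorem mem_span_orbit_and_apply_eq_self_iff (hp : 0 < p) (hB : ∀ a b, B (τ a) (τ b) = B a b)
    (hv : (τ ^ p) v = -v)
    (hon : ∀ i < p, ∀ j < p, B ((τ ^ i) v) ((τ ^ j) v) = if i = j then 1 else 0) (x : N) :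
    (x ∈ Submodule.span R (Set.range fun i => (τ ^ i) v) ∧ τ x = x) ↔
      ∃! c : R, 2 * c = 0 ∧ x = c • ∑ i ∈ range p, (τ ^ i) v := by
  have hvS : B v (∑ i ∈ range p, (τ ^ i) v) = 1 := by
    simpa using pow_apply_pairing_sum_range_pow_apply B hon hp
  constructor
  · rintro ⟨hx, hfix⟩
    have hcoeff : ∀ i, B ((τ ^ i) v) x = B v x := by
      intro i
      induction i with
      | zero => simp
      | succ i ih =>
        rw [← ih]
        conv_lhs => rw [← hfix]
        rw [pow_succ', Module.End.mul_apply, hB]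
    have h2 : 2 * B v x = 0 := by
      have h := hcoeff p
      rw [hv, map_neg, LinearMap.neg_apply] at h
      linear_combination -h
    refine ⟨B v x, ⟨h2, ?_⟩, ?_⟩
    · conv_lhs => rw [eq_sum_smul_pow_apply_of_mem_span B hp hv hon hx]
      simp_rw [hcoeff, ← smul_sum]
    · rintro c ⟨-, rfl⟩
      rw [map_smul, smul_eq_mul, hvS, mul_one]
  · rintro ⟨c, ⟨hc, rfl⟩, -⟩
    refine ⟨Submodule.smul_mem _ c (sum_mem fun i _ => Submodule.subset_span ⟨i, rfl⟩), ?_⟩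
    rw [map_smul, apply_sum_range_pow_apply hv, smul_sub, smul_smul, mul_comm, hc, zero_smul,
      sub_zero]

theorem pairing_sub_apply_sum_range_pow_apply_mem (hB : ∀ a b, B (τ a) (τ b) = B a b)
    (hv : (τ ^ p) v = -v) (y : N) :
    B (y - τ y) (∑ i ∈ range p, (τ ^ i) v) ∈ Ideal.span {(2 : R)} := by
  rw [Ideal.mem_span_singleton']
  refine ⟨-B (τ y) v, ?_⟩
  rw [map_sub, LinearMap.sub_apply, ← hB y, apply_sum_range_pow_apply hv, map_sub, map_smul,
    smul_eq_mul]
  ring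

theorem ker_mkQ_comp_flip_pairing_sum_range_pow_apply (hp : 0 < p)
    (hB : ∀ a b, B (τ a) (τ b) = B a b) (hv : (τ ^ p) v = -v)
    (hon : ∀ i < p, ∀ j < p, B ((τ ^ i) v) ((τ ^ j) v) = if i = j then 1 else 0) :
    LinearMap.ker ((Ideal.span {(2 : R)}).mkQ ∘ₗ B.flip (∑ i ∈ range p, (τ ^ i) v) ∘ₗ
        (Submodule.span R (Set.range fun i => (τ ^ i) v)).subtype) =
      (LinearMap.range (LinearMap.id - τ)).comap
        (Submodule.span R (Set.range fun i => (τ ^ i) v)).subtype := by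
  apply le_antisymm
  · rintro ⟨x, hx⟩ hker
    simp only [LinearMap.mem_ker, LinearMap.comp_apply, Submodule.mkQ_apply,
      Submodule.Quotient.mk_eq_zero, Submodule.subtype_apply, LinearMap.flip_apply] at hker
    obtain ⟨c, hc⟩ := Ideal.mem_span_singleton'.mp hker
    have hx_eq := eq_sum_smul_pow_apply_of_mem_span B hp hv hon hx
    have hsum : B x (∑ i ∈ range p, (τ ^ i) v) = ∑ i ∈ range p, B ((τ ^ i) v) x := by
      conv_lhs => rw [hx_eq, map_sum B, LinearMap.sum_apply]
      refine sum_congr rfl fun i hi => ?_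
      rw [map_smul, LinearMap.smul_apply, smul_eq_mul,
        pow_apply_pairing_sum_range_pow_apply B hon (mem_range.mp hi), mul_one]
    have hdecomp : x = c • (v - (τ ^ p) v) -
        ∑ i ∈ range p, B ((τ ^ i) v) x • (v - (τ ^ i) v) := by
      rw [hv, sub_neg_eq_add, ← two_smul R v, smul_smul, hc, hsum, sum_smul, ← sum_sub_distrib]
      conv_lhs => rw [hx_eq]
      simp [smul_sub]
    change x ∈ LinearMap.range _
    rw [hdecomp]
    exact sub_mem (Submodule.smul_mem _ _ (sub_pow_apply_mem_range_id_sub τ v p))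
      (sum_mem fun i _ => Submodule.smul_mem _ _ (sub_pow_apply_mem_range_id_sub τ v i))
  · rintro x ⟨y, hy⟩
    simp only [LinearMap.mem_ker, LinearMap.comp_apply, Submodule.mkQ_apply,
      Submodule.Quotient.mk_eq_zero, Submodule.subtype_apply, LinearMap.flip_apply]
    rw [Submodule.subtype_apply] at hy
    rw [← hy, LinearMap.sub_apply, LinearMap.id_apply]
    exact pairing_sub_apply_sum_range_pow_apply_mem B hB hv y

theorem surjective_mkQ_comp_flip_pairing_sum_range_pow_apply (hp : 0 < p)
    (hon : ∀ i < p, ∀ j < p, B ((τ ^ i) v) ((τ ^ j) v) = if i = j then 1 else 0) :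
    Function.Surjective ((Ideal.span {(2 : R)}).mkQ ∘ₗ B.flip (∑ i ∈ range p, (τ ^ i) v) ∘ₗ
      (Submodule.span R (Set.range fun i => (τ ^ i) v)).subtype) := by
  have hvS : B v (∑ i ∈ range p, (τ ^ i) v) = 1 := by
    simpa using pow_apply_pairing_sum_range_pow_apply B hon hp
  intro q
  obtain ⟨c, rfl⟩ := Submodule.mkQ_surjective _ q
  refine ⟨⟨c • v, Submodule.smul_mem _ c (Submodule.subset_span ⟨0, by simp⟩)⟩, ?_⟩
  simp only [LinearMap.comp_apply, Submodule.subtype_apply, LinearMap.flip_apply, map_smul,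
    hvS, smul_eq_mul, mul_one, Submodule.mkQ_apply]

end CyclicOrbit

theorem Function.Injective.iterate_ne_iterate_of_lt_period {α : Type*} {f : α → α}
    (hf : Function.Injective f) {x : α} {p : ℕ} (hmin : ∀ j, 0 < j → j < p → f^[j] x ≠ x)
    {i j : ℕ} (hi : i < p) (hj : j < p) (hij : i ≠ j) : f^[i] x ≠ f^[j] x := by
  wlog h : i < j generalizing i j
  · exact (this hj hi hij.symm (by omega)).symm
  intro he
  refine hmin (j - i) (by omega) (by omega) (hf.iterate i ?_)
  rw [← Function.iterate_add_apply, Nat.add_sub_cancel' h.le, he]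

namespace Finsupp

variable (α R : Type*) [CommSemiring R]

noncomputable def pairing : (α →₀ R) →ₗ[R] (α →₀ R) →ₗ[R] R :=
  Finsupp.lsum R fun a => LinearMap.toSpanSingleton R _ (Finsupp.lapply a)

variable {α R}

@[simp]
theorem pairing_single_left (a : α) (r : R) (y : α →₀ R) :
    pairing α R (single a r) y = r * y a := by
  simp [pairing]

end Finsupp

theorem sgn_mul_self (m : ℤ) : sgn m * sgn m = 1 := by
  unfold sgn
  split_ifs <;> norm_num

theorem rotate_one_rotW {B : Type*} (l : List B) : (rotW l).rotate 1 = l := by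
  cases l with
  | nil => rfl
  | cons b t =>
    show ((b :: t).getLast _ :: (b :: t).dropLast).rotate 1 = b :: t
    rw [List.rotate_cons_succ, List.rotate_zero]
    exact List.dropLast_append_getLast _

theorem rotW_injective {B : Type*} : Function.Injective (rotW (B := B)) :=
  Function.LeftInverse.injective (g := fun l => List.rotate l 1) rotate_one_rotW

section CyclicTau

variable {k B : Type*} [CommRing k] (deg : B → ℤ)

theorem exists_cyclicTau_single (l : List B) :
    ∃ s : k, s * s = 1 ∧
      cyclicTau (k := k) deg (Finsupp.single l 1) = s • Finsupp.single (rotW l) 1 := by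
  cases l with
  | nil => exact ⟨1, one_mul 1, by simp [cyclicTau, Finsupp.sum_single_index, rotW]⟩
  | cons b t =>
    refine ⟨(sgn (deg ((b :: t).getLast (by simp)) * degW deg (b :: t).dropLast) : k),
      by rw [← Int.cast_mul, sgn_mul_self, Int.cast_one], ?_⟩
    simp only [cyclicTau, Finsupp.lift_apply]
    rw [Finsupp.sum_single_index (by simp), one_smul, Int.cast_smul_eq_zsmul]
    rfl

theorem exists_cyclicTau_pow_single (l : List B) (i : ℕ) :
    ∃ s : k, s * s = 1 ∧
      (cyclicTau (k := k) deg ^ i) (Finsupp.single l 1) = s • Finsupp.single (rotW^[i] l) 1 := by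
  induction i with
  | zero => exact ⟨1, one_mul 1, by simp⟩
  | succ i ih =>
    obtain ⟨s, hs, h⟩ := ih
    obtain ⟨t, ht, h'⟩ := exists_cyclicTau_single (k := k) deg (rotW^[i] l)
    refine ⟨s * t, by rw [mul_mul_mul_comm, hs, ht, one_mul], ?_⟩
    rw [pow_succ', Module.End.mul_apply, h, map_smul, h', smul_smul,
      Function.iterate_succ_apply']

theorem pairing_cyclicTau (x y : List B →₀ k) :
    Finsupp.pairing _ k (cyclicTau (k := k) deg x) (cyclicTau (k := k) deg y) =
      Finsupp.pairing _ k x y := by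
  suffices (Finsupp.pairing _ k).compl₁₂ (cyclicTau (k := k) deg) (cyclicTau (k := k) deg) =
      Finsupp.pairing _ k from LinearMap.congr_fun₂ this x y
  ext a b
  simp only [LinearMap.comp_apply, Finsupp.lsingle_apply, LinearMap.compl₁₂_apply]
  obtain ⟨s, hs, ha⟩ := exists_cyclicTau_single (k := k) deg a
  by_cases hab : a = b
  · subst hab
    simp [ha, hs]
  · obtain ⟨t, -, hb⟩ := exists_cyclicTau_single (k := k) deg b
    simp [ha, hb, hab, rotW_injective.eq_iff]

theorem pairing_cyclicTau_pow_single {w : List B} {p : ℕ}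
    (hmin : ∀ j, 0 < j → j < p → rotW^[j] w ≠ w) (i : ℕ) (hi : i < p) (j : ℕ) (hj : j < p) :
    Finsupp.pairing _ k ((cyclicTau (k := k) deg ^ i) (Finsupp.single w 1))
      ((cyclicTau (k := k) deg ^ j) (Finsupp.single w 1)) = if i = j then 1 else 0 := by
  obtain ⟨s, hs, hwi⟩ := exists_cyclicTau_pow_single (k := k) deg w i
  by_cases hij : i = j
  · subst hij
    simp [hwi, hs]
  · obtain ⟨t, -, hwj⟩ := exists_cyclicTau_pow_single (k := k) deg w j
    have hne := rotW_injective.iterate_ne_iterate_of_lt_period hmin hi hj hij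
    simp [hwi, hwj, hij, hne]

theorem span_single_iterate_rotW (w : List B) :
    Submodule.span k {y | ∃ i : ℕ, y = Finsupp.single (rotW^[i] w) (1 : k)} =
      Submodule.span k (Set.range fun i => (cyclicTau (k := k) deg ^ i) (Finsupp.single w 1)) := by
  apply le_antisymm <;> rw [Submodule.span_le]
  · rintro _ ⟨i, rfl⟩
    obtain ⟨s, hs, hwi⟩ := exists_cyclicTau_pow_single (k := k) deg w i
    have hsingle : Finsupp.single (rotW^[i] w) (1 : k) =
        s • (cyclicTau (k := k) deg ^ i) (Finsupp.single w 1) := by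
      rw [hwi, smul_smul, hs, one_smul]
    rw [hsingle]
    exact Submodule.smul_mem _ s (Submodule.subset_span ⟨i, rfl⟩)
  · rw [Set.range_subset_iff]
    intro i
    obtain ⟨s, -, hwi⟩ := exists_cyclicTau_pow_single (k := k) deg w i
    rw [SetLike.mem_coe, hwi]
    exact Submodule.smul_mem _ s (Submodule.subset_span ⟨i, rfl⟩)

end CyclicTau

theorem orbit_torsion_summands_general (k B : Type*) [CommRing k] (deg : B → ℤ)
    (w : List B) (p : ℕ) (hp : 0 < p)
    -- `p` is the cyclic period of the word `w`
    (hmin : ∀ j, 0 < j → j < p → rotW^[j] w ≠ w)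
    -- the signed cyclic action returns `-[w]` after `p` steps
    (hsgn : (cyclicTau (k := k) deg ^ p) (Finsupp.single w 1) = -Finsupp.single w 1) :
    -- (a) the invariants of the orbit span are the 2-torsion of `k`,
    --     generated by `sym(w) = ∑_{i<p} τ^i·[w]`:
    (∀ x : List B →₀ k,
      (x ∈ Submodule.span k {y | ∃ i : ℕ, y = Finsupp.single (rotW^[i] w) (1 : k)} ∧
        cyclicTau (k := k) deg x = x)
      ↔ ∃! c : k, 2 * c = 0 ∧
          x = c • ∑ i ∈ Finset.range p, (cyclicTau (k := k) deg ^ i) (Finsupp.single w 1)) ∧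
    -- (b) the corresponding orbit summand of the coinvariants is `k/2k`:
    ∃ ψ : (Submodule.span k
        {y | ∃ i : ℕ, y = Finsupp.single (rotW^[i] w) (1 : k)}) →ₗ[k]
          (k ⧸ Ideal.span {(2 : k)}),
      Function.Surjective ψ ∧
      LinearMap.ker ψ
        = (LinearMap.range (LinearMap.id - cyclicTau (k := k) deg)).comap
            (Submodule.span k
              {y | ∃ i : ℕ, y = Finsupp.single (rotW^[i] w) (1 : k)}).subtype := by
  have hB := pairing_cyclicTau (k := k) deg
  have hon := pairing_cyclicTau_pow_single (k := k) deg hmin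
  rw [span_single_iterate_rotW deg w]
  exact ⟨mem_span_orbit_and_apply_eq_self_iff _ hp hB hsgn hon, _,
    surjective_mkQ_comp_flip_pairing_sum_range_pow_apply _ hp hon,
    ker_mkQ_comp_flip_pairing_sum_range_pow_apply _ hp hB hsgn hon⟩

theorem orbit_torsion_summands (k B : Type*) [CommRing k] (deg : B → ℤ)
    (w : List B) (hw : w ≠ []) (p : ℕ) (hp : 0 < p)
    -- `p` is the cyclic period of the word `w`
    (hper : rotW^[p] w = w) (hmin : ∀ j, 0 < j → j < p → rotW^[j] w ≠ w)
    -- the signed cyclic action returns `-[w]` after `p` steps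
    (hsgn : (cyclicTau (k := k) deg ^ p) (Finsupp.single w 1) = -Finsupp.single w 1) :
    -- (a) the invariants of the orbit span are the 2-torsion of `k`,
    --     generated by `sym(w) = ∑_{i<p} τ^i·[w]`:
    (∀ x : List B →₀ k,
      (x ∈ Submodule.span k {y | ∃ i : ℕ, y = Finsupp.single (rotW^[i] w) (1 : k)} ∧
        cyclicTau (k := k) deg x = x)
      ↔ ∃! c : k, 2 * c = 0 ∧
          x = c • ∑ i ∈ Finset.range p, (cyclicTau (k := k) deg ^ i) (Finsupp.single w 1)) ∧
    -- (b) the corresponding orbit summand of the coinvariants is `k/2k`: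
    ∃ ψ : (Submodule.span k
        {y | ∃ i : ℕ, y = Finsupp.single (rotW^[i] w) (1 : k)}) →ₗ[k]
          (k ⧸ Ideal.span {(2 : k)}),
      Function.Surjective ψ ∧
      LinearMap.ker ψ
        = (LinearMap.range (LinearMap.id - cyclicTau (k := k) deg)).comap
            (Submodule.span k
              {y | ∃ i : ℕ, y = Finsupp.single (rotW^[i] w) (1 : k)}).subtype :=
  orbit_torsion_summands_general k B deg w p hp hmin hsgn
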